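/- Let P be a polynomial over ℚ of degree k ≥ 1 with leading coefficient n/k! for a positive integer n (so P(T) = (n/k!)·T^k + lower-degree terms), written as the unique Macaulay sum P(T) = Σ_{i=1}^N binom(T + a_i − (i−1), a_i) with a_1 ≥ a_2 ≥ ⋯ ≥ a_N ≥ 0. Then exactly n of the a_i equal k, all a_i ≤ k, and consequently ω^k · n ≤ Σ_i ω^(a_i) < ω^k · (n+1) in ordinal arithmetic. -/

import Mathlib

/-!
The degree of `binomPoly a c` is `a` and its leading coefficient is `1 / a!`, so in any sum of
such polynomials the coefficient of `T^m`, for `m` at least every `a_i`, is `#{i | a_i = m} / m!`.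
Taking `m` to be the largest `a_i` shows that it is the degree `k` of `P`, and comparing the
coefficients of `T^k` shows that exactly `n` of the `a_i` equal `k`. On the ordinal side, `ω^k`
is additively principal, so in a sum of terms `ω^{a_i} ≤ ω^k` each term below `ω^k` is absorbed
by a later `ω^k` or stays below `ω^k` in total; hence the sum lies between `ω^k · n` and
`ω^k · (n + 1)`, whatever the order of the terms.
-/

open Polynomial Ordinal

/-- The binomial-coefficient polynomial `binom(T + c, a) = (T+c)(T+c−1)⋯(T+c−a+1)/a!`
as a polynomial in `T` over `ℚ`. -/
noncomputable def binomPoly (a : ℕ) (c : ℤ) : Polynomial ℚ :=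
  C (1 / (a.factorial : ℚ)) * ∏ j ∈ Finset.range a, (X + C ((c : ℚ) - (j : ℚ)))

lemma binomPoly_degree (a : ℕ) (c : ℤ) : (binomPoly a c).degree = a := by
  have hu : (1 / (a.factorial : ℚ)) ≠ 0 := by positivity
  rw [binomPoly, degree_C_mul hu, degree_prod]
  simp only [degree_X_add_C, Finset.sum_const, Finset.card_range, nsmul_one]

lemma binomPoly_natDegree (a : ℕ) (c : ℤ) : (binomPoly a c).natDegree = a :=
  natDegree_eq_of_degree_eq_some (binomPoly_degree a c)

lemma binomPoly_leadingCoeff (a : ℕ) (c : ℤ) :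
    (binomPoly a c).leadingCoeff = 1 / (a.factorial : ℚ) := by
  have hmonic : (∏ j ∈ Finset.range a, (X + C ((c : ℚ) - (j : ℚ)))).Monic :=
    monic_prod_of_monic _ _ fun j _ => monic_X_add_C _
  rw [binomPoly, leadingCoeff_mul, hmonic.leadingCoeff, leadingCoeff_C, mul_one]

lemma binomPoly_coeff_self (a : ℕ) (c : ℤ) :
    (binomPoly a c).coeff a = 1 / (a.factorial : ℚ) := by
  rw [← binomPoly_leadingCoeff a c, leadingCoeff, binomPoly_natDegree]

lemma binomPoly_coeff_of_lt {a m : ℕ} (c : ℤ) (h : a < m) : (binomPoly a c).coeff m = 0 :=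
  coeff_eq_zero_of_natDegree_lt (by rwa [binomPoly_natDegree])

lemma coeff_sum_binomPoly {ι : Type*} (s : Finset ι) (d : ι → ℕ) (c : ι → ℤ) {m : ℕ}
    (h : ∀ i ∈ s, d i ≤ m) :
    (∑ i ∈ s, binomPoly (d i) (c i)).coeff m =
      (s.filter (fun i => d i = m)).card * (1 / (m.factorial : ℚ)) := by
  have hterm : ∀ i ∈ s, (binomPoly (d i) (c i)).coeff m =
      if d i = m then 1 / (m.factorial : ℚ) else 0 := by
    intro i hi
    split_ifs with him
    · rw [← him, binomPoly_coeff_self]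
    · exact binomPoly_coeff_of_lt _ ((h i hi).lt_of_ne him)
  rw [finsetSum_coeff, Finset.sum_congr rfl hterm, ← Finset.sum_filter, Finset.sum_const]
  exact nsmul_eq_mul _ _

lemma natDegree_sum_binomPoly {ι : Type*} (s : Finset ι) (d : ι → ℕ) (c : ι → ℤ) :
    (∑ i ∈ s, binomPoly (d i) (c i)).natDegree = s.sup d := by
  refine le_antisymm (natDegree_sum_le_of_forall_le s _ fun i hi => ?_) ?_
  · rw [binomPoly_natDegree]
    exact Finset.le_sup hi
  rcases s.eq_empty_or_nonempty with rfl | hs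
  · simp
  obtain ⟨i, hi, hsup⟩ := s.exists_mem_eq_sup hs d
  have hcard : 0 < (s.filter (fun j => d j = s.sup d)).card :=
    Finset.card_pos.mpr ⟨i, Finset.mem_filter.mpr ⟨hi, hsup.symm⟩⟩
  refine le_natDegree_of_ne_zero ?_
  rw [coeff_sum_binomPoly s d c fun j hj => Finset.le_sup hj]
  positivity

lemma Ordinal.mul_count_le_sum (p : Ordinal) (l : List Ordinal) : p * l.count p ≤ l.sum := by
  induction l with
  | nil => simp
  | cons x l ih =>
    rw [List.sum_cons]
    by_cases hx : x = p
    · subst hx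
      rw [List.count_cons_self, Nat.add_comm, Nat.cast_add, Nat.cast_one, mul_add, mul_one]
      exact add_le_add_right ih x
    · rw [List.count_cons_of_ne hx]
      exact ih.trans le_add_self

lemma Ordinal.sum_lt_mul_count_add_one {p : Ordinal} (hp : IsPrincipal (· + ·) p) (hp0 : 0 < p)
    (l : List Ordinal) (hl : ∀ x ∈ l, x ≤ p) : l.sum < p * (l.count p + 1) := by
  induction l with
  | nil => simpa using hp0
  | cons x l ih =>
    have ih := ih fun y hy => hl y (List.mem_cons_of_mem x hy)
    rw [List.sum_cons]
    rcases (hl x List.mem_cons_self).lt_or_eq with hx | rfl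
    · rw [List.count_cons_of_ne hx.ne]
      rcases lt_or_ge l.sum p with hsum | hsum
      · exact (hp hx hsum).trans_le (le_mul_left _ (by positivity))
      · rwa [hp.add_eq_right_of_le hx hsum]
    · have hcast : ((l.count x + 1 : ℕ) : Ordinal) + 1 = 1 + ((l.count x : Ordinal) + 1) := by
        norm_cast
        omega
      rw [List.count_cons_self, hcast, mul_add, mul_one]
      exact add_lt_add_right ih x

lemma List.count_map_finRange {α : Type*} [DecidableEq α] {N : ℕ} (f : Fin N → α) (x : α) :
    ((List.finRange N).map f).count x = (Finset.univ.filter (fun i => f i = x)).card := by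
  rw [Finset.card_def, Finset.filter_val, Fin.univ_def, Multiset.filter_coe, Multiset.coe_card,
    List.count_eq_countP, List.countP_map, List.countP_eq_length_filter]
  congr 2

lemma Ordinal.omega0_pow_le_omega0_pow_iff {a b : ℕ} : ω ^ a ≤ ω ^ b ↔ a ≤ b := by
  rw [← opow_natCast, ← opow_natCast, opow_le_opow_iff_right one_lt_omega0, Nat.cast_le]

lemma Ordinal.omega0_pow_inj {a b : ℕ} : ω ^ a = ω ^ b ↔ a = b := by
  rw [← opow_natCast, ← opow_natCast, opow_right_inj one_lt_omega0, Nat.cast_inj]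

lemma Ordinal.isPrincipal_add_omega0_pow (k : ℕ) : IsPrincipal (· + ·) (ω ^ k) := by
  simpa only [opow_natCast] using isPrincipal_add_omega0_opow k

lemma Ordinal.count_map_omega0_pow (l : List ℕ) (k : ℕ) :
    (l.map (ω ^ ·)).count (ω ^ k) = l.count k :=
  List.count_map_of_injective _ _ (fun _ _ => omega0_pow_inj.mp) _

lemma Ordinal.omega0_pow_mul_count_le_sum (l : List ℕ) (k : ℕ) :
    ω ^ k * l.count k ≤ (l.map (ω ^ ·)).sum := by
  simpa only [count_map_omega0_pow] using mul_count_le_sum (ω ^ k) (l.map (ω ^ ·))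

lemma Ordinal.sum_lt_omega0_pow_mul_count_add_one (l : List ℕ) {k : ℕ} (hl : ∀ e ∈ l, e ≤ k) :
    (l.map (ω ^ ·)).sum < ω ^ k * (l.count k + 1) := by
  have hle : ∀ x ∈ l.map (ω ^ ·), x ≤ ω ^ k :=
    List.forall_mem_map.mpr fun e he => omega0_pow_le_omega0_pow_iff.mpr (hl e he)
  simpa only [count_map_omega0_pow] using sum_lt_mul_count_add_one (isPrincipal_add_omega0_pow k)
    (pos_iff_ne_zero.mpr (pow_ne_zero k omega0_ne_zero)) _ hle

theorem macaulay_ordinal_rank_bounds_general (P : Polynomial ℚ) (k n N : ℕ)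
    (hdeg : P.degree = k) (hlead : P.leadingCoeff = (n : ℚ) / (k.factorial : ℚ))
    (a : Fin N → ℕ)
    (hP : P = ∑ i : Fin N, binomPoly (a i) ((a i : ℤ) - (i : ℤ))) :
    (Finset.univ.filter (fun i : Fin N => a i = k)).card = n ∧
    (∀ i : Fin N, a i ≤ k) ∧
    (ω : Ordinal) ^ k * n ≤ ((List.finRange N).map (fun i => (ω : Ordinal) ^ (a i))).sum ∧
    ((List.finRange N).map (fun i => (ω : Ordinal) ^ (a i))).sum < (ω : Ordinal) ^ k * (n + 1) := by
  have hnatDegree : P.natDegree = k := natDegree_eq_of_degree_eq_some hdeg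
  have hle : ∀ i, a i ≤ k := fun i => by
    rw [← hnatDegree, hP, natDegree_sum_binomPoly]
    exact Finset.le_sup (Finset.mem_univ i)
  have hcard : (Finset.univ.filter (fun i : Fin N => a i = k)).card = n := by
    have hcoeff := coeff_sum_binomPoly Finset.univ a (fun i => (a i : ℤ) - i) fun i _ => hle i
    rw [← hP, ← hnatDegree, ← leadingCoeff, hlead, hnatDegree, div_eq_mul_one_div] at hcoeff
    exact_mod_cast (mul_right_cancel₀ (by positivity) hcoeff).symm
  refine ⟨hcard, hle, ?_, ?_⟩
  · simpa only [List.map_map, Function.comp_def, List.count_map_finRange, hcard]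
      using omega0_pow_mul_count_le_sum ((List.finRange N).map a) k
  · simpa only [List.map_map, Function.comp_def, List.count_map_finRange, hcard]
      using sum_lt_omega0_pow_mul_count_add_one ((List.finRange N).map a)
        (List.forall_mem_map.mpr fun i _ => hle i)

/-- Suppose `P ∈ ℚ[T]` has degree `k ≥ 1` and leading coefficient `n/k!` for a positive
integer `n`, and `P` is written as its Macaulay sum
`P(T) = Σ_{i=1}^N binom(T + a_i − (i−1), a_i)` with `a_1 ≥ a_2 ≥ ⋯ ≥ a_N ≥ 0`.
Then exactly `n` of the `a_i` equal `k`, all `a_i ≤ k`, and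
`ω^k·n ≤ Σ_i ω^(a_i) < ω^k·(n+1)` in ordinal arithmetic (the ordinal sum being taken
in the given, decreasing-exponent, order). -/
theorem macaulay_ordinal_rank_bounds (P : Polynomial ℚ) (k n N : ℕ)
    (hk : 1 ≤ k) (hn : 0 < n)
    (hdeg : P.degree = k) (hlead : P.leadingCoeff = (n : ℚ) / (k.factorial : ℚ))
    (a : Fin N → ℕ) (hanti : ∀ i j : Fin N, i ≤ j → a j ≤ a i)
    (hP : P = ∑ i : Fin N, binomPoly (a i) ((a i : ℤ) - (i : ℤ))) :
    (Finset.univ.filter (fun i : Fin N => a i = k)).card = n ∧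
    (∀ i : Fin N, a i ≤ k) ∧
    (ω : Ordinal) ^ k * n ≤ ((List.finRange N).map (fun i => (ω : Ordinal) ^ (a i))).sum ∧
    ((List.finRange N).map (fun i => (ω : Ordinal) ^ (a i))).sum < (ω : Ordinal) ^ k * (n + 1) :=
  macaulay_ordinal_rank_bounds_general P k n N hdeg hlead a hP
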